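/- arXiv:1104.1366 — 4 statements merged into one kernel-verified Lean document; each statement's English description precedes it below -/
import Mathlib

section
/- Let K be a field and A a left noetherian K-algebra without zero divisors. Let w ∈ A and let σ be a ring automorphism of A such that w·y = σ(y)·w for all y ∈ A. Let J be a maximal left ideal of A and μ ∈ K a nonzero scalar with w − μ·1 ∈ J. Let x ∈ A be a non-unit, set I = Jx, L = Ax/I, M = A/I and N = A/Ax. Assume: (4) for every m ≥ 0 there is no a ∈ A with σ^m(x)·a − 1 ∈ J; (5) the chain of submodules N ⊋ wN ⊋ w²N ⊋ … ⊋ w^mN ⊋ … is strictly descending; (6) every nonzero A-submodule of N contains w^mN for some m ≥ 0. Then M is an essential extension of L, i.e. the image of Ax in M = A/Jx is a simple submodule having nonzero intersection with every nonzero submodule of M; in particular M is a finitely generated monolithic non-artinian left A-module. -/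
/-!
Right multiplication by `x` identifies `A/J` with `Ax/Jx`, so `L` is simple. If a nonzero
`U ≤ A/Jx` met `L` trivially, its image in `N` would be nonzero and so, by (6), would contain the
class of some `w^m`: there is `[a] ∈ U` with `a = w^m + bx`. Since `w^m x = σ^m(x) w^m`, we get
`σ^m(x) a = (w^m + σ^m(x) b) x ∈ Ax`, and this is not in `Jx`, because `w^m ≡ μ^m (mod J)` and (4)
prevent `w^m + σ^m(x) b ∈ J`. Finally `M` surjects onto `N`, which is not artinian by (5).
-/

def IsMonolithic (R : Type*) (M : Type*) [Ring R] [AddCommGroup M] [Module R M] : Prop :=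
  sInf {N : Submodule R M | N ≠ ⊥} ≠ ⊥

open Submodule LinearMap

section Powers

variable {A : Type*} [Ring A]

theorem pow_mul_eq_pow_apply_mul_pow {w : A} {σ : A ≃+* A} (hw : ∀ y, w * y = σ y * w)
    (m : ℕ) (y : A) : w ^ m * y = (σ ^ m) y * w ^ m := by
  induction m generalizing y with
  | zero => simp
  | succ n ih => rw [pow_succ, mul_assoc, hw, ← mul_assoc, ih, pow_succ, mul_assoc]; rfl

variable {K : Type*} [Field K] [Algebra K A] {J : Ideal A} {w : A} {μ : K}

theorem pow_sub_algebraMap_pow_mem (hwJ : w - algebraMap K A μ ∈ J) (m : ℕ) :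
    w ^ m - algebraMap K A (μ ^ m) ∈ J := by
  rw [map_pow, ← (Algebra.commute_algebraMap_right μ w).geom_sum₂_mul]
  exact J.mul_mem_left _ hwJ

theorem pow_notMem (hJ : J ≠ ⊤) (hμ : μ ≠ 0) (hwJ : w - algebraMap K A μ ∈ J) (m : ℕ) :
    w ^ m ∉ J := fun h ↦
  hJ <| J.eq_top_of_isUnit_mem
    (by simpa only [sub_sub_cancel] using J.sub_mem h (pow_sub_algebraMap_pow_mem hwJ m))
    ((hμ.isUnit.pow m).map _)

theorem pow_add_mul_notMem {c : A} (hc : ¬ ∃ a, c * a - 1 ∈ J) (hμ : μ ≠ 0)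
    (hwJ : w - algebraMap K A μ ∈ J) (m : ℕ) (b : A) : w ^ m + c * b ∉ J := by
  intro h
  have hcb : c * b + algebraMap K A (μ ^ m) ∈ J := by
    simpa only [add_sub_sub_cancel] using J.sub_mem h (pow_sub_algebraMap_pow_mem hwJ m)
  refine hc ⟨-((μ ^ m)⁻¹ • b), ?_⟩
  convert J.neg_mem (J.smul_of_tower_mem (μ ^ m)⁻¹ hcb) using 1
  rw [smul_add, Algebra.smul_def _ (algebraMap K A _), ← map_mul,
    inv_mul_cancel₀ (pow_ne_zero m hμ), map_one, mul_neg, mul_smul_comm, neg_add, sub_eq_add_neg]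

theorem ne_bot_of_sub_algebraMap_mem (hμ : μ ≠ 0) (hwJ : w - algebraMap K A μ ∈ J)
    (hw : ¬ IsUnit w) : J ≠ ⊥ := by
  rintro rfl
  rw [mem_bot, sub_eq_zero] at hwJ
  exact hw (hwJ ▸ hμ.isUnit.map _)

end Powers

section Quotients

variable {A : Type*} [Ring A]

theorem map_toSpanSingleton_le_span_singleton (J : Submodule A A) (x : A) :
    J.map (toSpanSingleton A A x) ≤ span A {x} := by
  rw [LinearMap.span_singleton_eq_range]
  exact map_le_range

theorem ne_zero_of_forall_ne_bot_map_span_pow_le {x : A} {J : Ideal A} {w : A} (hJ : J ≠ ⊥)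
    (hwJ : ∀ m : ℕ, w ^ m ∉ J)
    (h : ∀ U : Submodule A (A ⧸ span A {x}), U ≠ ⊥ →
      ∃ m : ℕ, map (span A {x}).mkQ (Ideal.span {w ^ m}) ≤ U) : x ≠ 0 := by
  rintro rfl
  have hinj : Function.Injective (span A {(0 : A)}).mkQ := by
    rw [← ker_eq_bot, ker_mkQ, span_zero_singleton]
  obtain ⟨m, hm⟩ := h (Submodule.map (span A {0}).mkQ J) <| by
    rwa [ne_eq, ← Submodule.map_bot (span A {(0 : A)}).mkQ,
      (map_injective_of_injective hinj).eq_iff]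
  rw [map_le_map_iff_of_injective hinj, Ideal.span_singleton_le_iff_mem] at hm
  exact hwJ m hm

variable [NoZeroDivisors A] {x : A}

theorem mul_mem_map_toSpanSingleton_iff (hx : x ≠ 0) {J : Submodule A A} {a : A} :
    a * x ∈ J.map (toSpanSingleton A A x) ↔ a ∈ J := by
  refine ⟨?_, fun ha ↦ ⟨a, ha, rfl⟩⟩
  rintro ⟨j, hj, hja⟩
  rwa [← mul_right_cancel₀ hx hja]

theorem isSimpleModule_map_mkQ_span_singleton {J : Submodule A A} (hJ : IsCoatom J) (hx : x ≠ 0) :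
    IsSimpleModule A (map (J.map (toSpanSingleton A A x)).mkQ (span A {x})) := by
  set f := (J.map (toSpanSingleton A A x)).mkQ ∘ₗ toSpanSingleton A A x
  have hker : ker f = J := by
    ext a
    simp only [f, mem_ker, coe_comp, Function.comp_apply, toSpanSingleton_apply, smul_eq_mul,
      mkQ_apply, Quotient.mk_eq_zero, mul_mem_map_toSpanSingleton_iff hx]
  have hrange : range f = map (J.map (toSpanSingleton A A x)).mkQ (span A {x}) := by
    rw [range_comp, LinearMap.span_singleton_eq_range]
  have := isSimpleModule_iff_isCoatom.mpr hJ
  exact .congr <| ((quotEquivOfEq _ _ hker).symm.trans f.quotKerEquivRange).trans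
    (LinearEquiv.ofEq _ _ hrange) |>.symm

end Quotients

theorem isMonolithic_of_isAtom {R M : Type*} [Ring R] [AddCommGroup M] [Module R M]
    {L : Submodule R M} (hL : IsAtom L) (h : ∀ U : Submodule R M, U ≠ ⊥ → L ⊓ U ≠ ⊥) :
    IsMonolithic R M := fun hbot ↦
  hL.1 <| eq_bot_iff.2 <| hbot ▸ le_sInf fun U hU ↦
    hL.not_disjoint_iff_le.1 (disjoint_iff.not.2 (h U hU))

theorem map_mkQ_span_singleton_inf_ne_bot {K A : Type*} [Field K] [Ring A] [Algebra K A]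
    [NoZeroDivisors A] {w : A} {σ : A ≃+* A} (hw : ∀ y : A, w * y = σ y * w) {J : Ideal A}
    {μ : K} (hμ : μ ≠ 0) (hwJ : w - algebraMap K A μ ∈ J) {x : A} (hx : x ≠ 0)
    (h4 : ∀ m : ℕ, ¬ ∃ a : A, (σ ^ m) x * a - 1 ∈ J)
    (h6 : ∀ U : Submodule A (A ⧸ span A {x}), U ≠ ⊥ →
      ∃ m : ℕ, map (span A {x}).mkQ (Ideal.span {w ^ m}) ≤ U)
    {U : Submodule A (A ⧸ Submodule.map (toSpanSingleton A A x) J)} (hU : U ≠ ⊥) :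
    map (Submodule.map (toSpanSingleton A A x) J).mkQ (span A {x}) ⊓ U ≠ ⊥ := by
  set π := factor (map_toSpanSingleton_le_span_singleton J x)
  by_cases hV : U.map π = ⊥
  · have hUL : U ≤ map (Submodule.map (toSpanSingleton A A x) J).mkQ (span A {x}) := by
      rwa [← comap_id (span A {x}), ← ker_mapQ, le_ker_iff_map]
    rwa [inf_eq_right.mpr hUL]
  obtain ⟨m, hm⟩ := h6 _ hV
  obtain ⟨u, huU, hu⟩ := hm (mem_map_of_mem (Ideal.mem_span_singleton_self (w ^ m)))
  obtain ⟨a, rfl⟩ := mkQ_surjective _ u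
  obtain ⟨b, hb⟩ := mem_span_singleton.mp ((Submodule.Quotient.eq _).mp hu)
  have hca : (σ ^ m) x * a = (w ^ m + (σ ^ m) x * b) * x := by
    rw [add_mul, mul_assoc, ← smul_eq_mul b, hb, LinearMap.id_apply, mul_sub,
      ← pow_mul_eq_pow_apply_mul_pow hw, add_sub_cancel]
  refine (Submodule.ne_bot_iff _).mpr ⟨mkQ _ ((σ ^ m) x * a), ⟨?_, U.smul_mem _ huU⟩, ?_⟩
  · exact mem_map_of_mem (hca ▸ smul_mem _ _ (mem_span_singleton_self x))
  · rw [mkQ_apply, Ne, Quotient.mk_eq_zero, hca, mul_mem_map_toSpanSingleton_iff hx]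
    exact pow_add_mul_notMem (h4 m) hμ hwJ m b

theorem essential_extension_construction_general {K A : Type*} [Field K] [Ring A] [Algebra K A]
    [NoZeroDivisors A]
    (w : A) (σ : A ≃+* A) (hw : ∀ y : A, w * y = σ y * w)
    (J : Ideal A) (hJ : J.IsMaximal)
    (μ : K) (hμ : μ ≠ 0) (hwJ : w - algebraMap K A μ ∈ J)
    (x : A)
    -- assumption (4)
    (h4 : ∀ m : ℕ, ¬ ∃ a : A, (σ ^ m) x * a - 1 ∈ J)
    -- assumption (5): the chain N ⊋ wN ⊋ w²N ⊋ … is strictly descending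
    (h5 : ∀ m : ℕ,
      Submodule.map (Submodule.span A {x}).mkQ (Ideal.span {w ^ (m + 1)}) <
        Submodule.map (Submodule.span A {x}).mkQ (Ideal.span {w ^ m}))
    -- assumption (6): every nonzero submodule of N contains w^m N for some m
    (h6 : ∀ U : Submodule A (A ⧸ (Submodule.span A {x} : Submodule A A)), U ≠ ⊥ →
      ∃ m : ℕ, Submodule.map (Submodule.span A {x}).mkQ (Ideal.span {w ^ m}) ≤ U) :
    IsSimpleModule A
      ↥(Submodule.map (Submodule.map (LinearMap.toSpanSingleton A A x) J).mkQ
          (Submodule.span A {x})) ∧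
    (∀ U : Submodule A (A ⧸ (Submodule.map (LinearMap.toSpanSingleton A A x) J)), U ≠ ⊥ →
      (Submodule.map (Submodule.map (LinearMap.toSpanSingleton A A x) J).mkQ
          (Submodule.span A {x})) ⊓ U ≠ ⊥) ∧
    Module.Finite A (A ⧸ (Submodule.map (LinearMap.toSpanSingleton A A x) J)) ∧
    IsMonolithic A (A ⧸ (Submodule.map (LinearMap.toSpanSingleton A A x) J)) ∧
    ¬ IsArtinian A (A ⧸ (Submodule.map (LinearMap.toSpanSingleton A A x) J)) := by
  have hw_not_unit : ¬ IsUnit w := fun hu ↦ (h5 0).ne <| by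
    rw [zero_add, pow_one, pow_zero, Ideal.span_singleton_one,
      Ideal.eq_top_of_isUnit_mem _ (Ideal.mem_span_singleton_self w) hu]
  have hx : x ≠ 0 := ne_zero_of_forall_ne_bot_map_span_pow_le
    (ne_bot_of_sub_algebraMap_mem hμ hwJ hw_not_unit) (pow_notMem hJ.ne_top hμ hwJ) h6
  have hsimple := isSimpleModule_map_mkQ_span_singleton (Ideal.isMaximal_def.mp hJ) hx
  have hessential := fun U (hU : U ≠ ⊥) ↦ map_mkQ_span_singleton_inf_ne_bot hw hμ hwJ hx h4 h6 hU
  refine ⟨hsimple, hessential, inferInstance,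
    isMonolithic_of_isAtom (isSimpleModule_iff_isAtom.mp hsimple) hessential, fun _ ↦ ?_⟩
  have := isArtinian_of_surjective _ _
    (factor_surjective (map_toSpanSingleton_le_span_singleton J x))
  exact not_strictAnti_of_wellFoundedLT _ (strictAnti_nat_of_succ_lt
    (f := fun m ↦ Submodule.map (Submodule.span A {x}).mkQ (Ideal.span {w ^ m})) h5)

/-- the main construction.  `A` is a left noetherian `K`-algebra without zero
divisors, `w ∈ A` and `σ` is a ring automorphism with `w * y = σ y * w` for all `y`,
`J` is a maximal left ideal with `w - μ•1 ∈ J` for a nonzero scalar `μ`, and `x` is a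
non-unit.  Setting `I = Jx`, `M = A/I`, `N = A/Ax`, under assumptions (4), (5), (6),
the image of `Ax` in `M` is a simple submodule meeting every nonzero submodule of `M`
nontrivially; in particular `M` is a finitely generated monolithic non-artinian module. -/
theorem essential_extension_construction {K A : Type*} [Field K] [Ring A] [Algebra K A]
    [IsNoetherianRing A] [NoZeroDivisors A]
    (w : A) (σ : A ≃+* A) (hw : ∀ y : A, w * y = σ y * w)
    (J : Ideal A) (hJ : J.IsMaximal)
    (μ : K) (hμ : μ ≠ 0) (hwJ : w - algebraMap K A μ ∈ J)
    (x : A) (hx : ¬ IsUnit x)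
    -- assumption (4)
    (h4 : ∀ m : ℕ, ¬ ∃ a : A, (σ ^ m) x * a - 1 ∈ J)
    -- assumption (5): the chain N ⊋ wN ⊋ w²N ⊋ … is strictly descending
    (h5 : ∀ m : ℕ,
      Submodule.map (Submodule.span A {x}).mkQ (Ideal.span {w ^ (m + 1)}) <
        Submodule.map (Submodule.span A {x}).mkQ (Ideal.span {w ^ m}))
    -- assumption (6): every nonzero submodule of N contains w^m N for some m
    (h6 : ∀ U : Submodule A (A ⧸ (Submodule.span A {x} : Submodule A A)), U ≠ ⊥ →
      ∃ m : ℕ, Submodule.map (Submodule.span A {x}).mkQ (Ideal.span {w ^ m}) ≤ U) :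
    IsSimpleModule A
      ↥(Submodule.map (Submodule.map (LinearMap.toSpanSingleton A A x) J).mkQ
          (Submodule.span A {x})) ∧
    (∀ U : Submodule A (A ⧸ (Submodule.map (LinearMap.toSpanSingleton A A x) J)), U ≠ ⊥ →
      (Submodule.map (Submodule.map (LinearMap.toSpanSingleton A A x) J).mkQ
          (Submodule.span A {x})) ⊓ U ≠ ⊥) ∧
    Module.Finite A (A ⧸ (Submodule.map (LinearMap.toSpanSingleton A A x) J)) ∧
    IsMonolithic A (A ⧸ (Submodule.map (LinearMap.toSpanSingleton A A x) J)) ∧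
    ¬ IsArtinian A (A ⧸ (Submodule.map (LinearMap.toSpanSingleton A A x) J)) :=
  essential_extension_construction_general w σ hw J hJ μ hμ hwJ x h4 h5 h6
end

section
/- Let K be a field and q ∈ K a nonzero element that is not a root of unity. Let A = K⟨a,b⟩/(ab − q·ba) be the coordinate ring of the quantum plane, let σ be the K-algebra automorphism of A with σ(a) = q⁻¹a and σ(b) = qb, let J = A(ab − 1) and x = a − 1. Then J is a maximal left ideal of A, and for every m ≥ 0 there is no z ∈ A with σ^m(x)·z − 1 ∈ J. -/
noncomputable section

/-- The defining relation `ab = q·ba` of the coordinate ring of the quantum plane,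
as a relation on the free algebra on two generators. -/
def qpRel (K : Type*) [Field K] (q : K) :
    FreeAlgebra K (Fin 2) → FreeAlgebra K (Fin 2) → Prop := fun X Y =>
  X = FreeAlgebra.ι K (0 : Fin 2) * FreeAlgebra.ι K (1 : Fin 2) ∧
  Y = q • (FreeAlgebra.ι K (1 : Fin 2) * FreeAlgebra.ι K (0 : Fin 2))

/-- The coordinate ring of the quantum plane `K⟨a,b⟩/(ab − q·ba)`. -/
abbrev QuantumPlane (K : Type*) [Field K] (q : K) := RingQuot (qpRel K q)

/-- The generator `a` of the quantum plane. -/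
def qpA (K : Type*) [Field K] (q : K) : QuantumPlane K q :=
  RingQuot.mkAlgHom K (qpRel K q) (FreeAlgebra.ι K (0 : Fin 2))

/-- The generator `b` of the quantum plane. -/
def qpB (K : Type*) [Field K] (q : K) : QuantumPlane K q :=
  RingQuot.mkAlgHom K (qpRel K q) (FreeAlgebra.ι K (1 : Fin 2))

/-!
`A/J` is realised on `K[ℤ] = ℤ →₀ K`, with `a` acting as the shift `eₙ ↦ eₙ₊₁` and `b` as
`eₙ ↦ q⁻ⁿ eₙ₋₁`: modulo `J` every element of `A` is a combination of the monomials `aⁿ`, `bⁿ`,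
which are sent to independent multiples of the `eₙ`, so `y ↦ y • e₀` has kernel exactly `J`.
Since `ab` acts diagonally with the pairwise distinct eigenvalues `q⁻ⁿ`, every nonzero vector
generates the whole module, hence `J` is maximal. Finally `σᵐ(a - 1) = c • a - 1` with `c ≠ 0`,
and the functional `v ↦ ∑ vₙ c⁻ⁿ` vanishes on the image of `c • shift - 1` but not on `e₀`.
-/

theorem mul_pow_eq_smul_pow_mul {R A : Type*} [CommSemiring R] [Semiring A] [Algebra R A]
    {x y : A} {c : R} (h : x * y = c • (y * x)) (n : ℕ) :
    x * y ^ n = c ^ n • (y ^ n * x) := by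
  induction n with
  | zero => simp
  | succ n ih =>
    rw [pow_succ, ← mul_assoc, ih, smul_mul_assoc, mul_assoc, h, mul_smul_comm, smul_smul,
      ← mul_assoc, pow_succ]

theorem AlgEquiv.pow_apply_eq_smul {R A : Type*} [CommSemiring R] [Semiring A] [Algebra R A]
    (f : A ≃ₐ[R] A) {x : A} {c : R} (h : f x = c • x) (m : ℕ) : (f ^ m) x = c ^ m • x := by
  induction m with
  | zero => simp
  | succ m ih => rw [pow_succ', AlgEquiv.mul_apply, ih, map_smul, h, smul_smul, pow_succ]

theorem Submodule.mul_mem_span_of_adjoin_eq_top {R A : Type*} [CommSemiring R] [Semiring A]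
    [Algebra R A] {s S : Set A} (hs : Algebra.adjoin R s = ⊤)
    (hS : ∀ r ∈ s, ∀ x ∈ S, r * x ∈ span R S) (r : A) {x : A} (hx : x ∈ span R S) :
    r * x ∈ span R S := by
  have hr : r ∈ Algebra.adjoin R s := hs ▸ Algebra.mem_top
  induction hr using Algebra.adjoin_induction generalizing x with
  | mem r hr =>
    have : span R S ≤ (span R S).comap (LinearMap.mulLeft R r) := span_le.2 (hS r hr)
    exact this hx
  | algebraMap c => simpa [← Algebra.smul_def] using smul_mem _ c hx
  | add r r' _ _ h h' => simpa [add_mul] using add_mem (h hx) (h' hx)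
  | mul r r' _ _ h h' => simpa [mul_assoc] using h (h' hx)

theorem zpow_injective_of_not_isOfFinOrder {G₀ : Type*} [GroupWithZero G₀] {q : G₀}
    (hq0 : q ≠ 0) (hq : ¬ IsOfFinOrder q) : Function.Injective (fun n : ℤ => q ^ n) := by
  have hu : ¬ IsOfFinOrder (Units.mk0 q hq0) := by rwa [← Units.isOfFinOrder_val]
  intro m n h
  apply injective_zpow_iff_not_isOfFinOrder.2 hu
  simpa [Units.ext_iff] using h

namespace QuantumPlane

variable {K : Type*} [Field K] {q : K}

local notation "J" => Ideal.span {qpA K q * qpB K q - 1}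

theorem qpA_mul_qpB : qpA K q * qpB K q = q • (qpB K q * qpA K q) := by
  simpa [qpA, qpB] using RingQuot.mkAlgHom_rel K (s := qpRel K q) ⟨rfl, rfl⟩

theorem adjoin_qpA_qpB : Algebra.adjoin K {qpA K q, qpB K q} = ⊤ := by
  have : {qpA K q, qpB K q} = RingQuot.mkAlgHom K (qpRel K q) '' Set.range (FreeAlgebra.ι K) := by
    simp [← Set.range_comp, Set.ext_iff, Fin.exists_fin_two, qpA, qpB, eq_comm]
  rw [this, ← AlgHom.map_adjoin, FreeAlgebra.adjoin_range_ι, Algebra.map_top,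
    AlgHom.range_eq_top]
  exact RingQuot.mkAlgHom_surjective K (qpRel K q)

theorem qpA_mul_qpB_mul_qpB_pow (j : ℕ) :
    qpA K q * qpB K q * qpB K q ^ j = q ^ j • (qpB K q ^ j * (qpA K q * qpB K q)) :=
  mul_pow_eq_smul_pow_mul (by conv_lhs => rw [qpA_mul_qpB, smul_mul_assoc, mul_assoc]) j

theorem qpB_mul_qpA (hq0 : q ≠ 0) : qpB K q * qpA K q = q⁻¹ • (qpA K q * qpB K q) := by
  rw [qpA_mul_qpB, smul_smul, inv_mul_cancel₀ hq0, one_smul]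

theorem qpA_mul_qpB_mul_qpA_pow (hq0 : q ≠ 0) (m : ℕ) :
    qpA K q * qpB K q * qpA K q ^ m = q⁻¹ ^ m • (qpA K q ^ m * (qpA K q * qpB K q)) :=
  mul_pow_eq_smul_pow_mul (by rw [mul_assoc, qpB_mul_qpA hq0, mul_smul_comm]) m

theorem smul_mul_qpA_mul_qpB_sub_smul_mem (c : K) (y : QuantumPlane K q) :
    c • (y * (qpA K q * qpB K q)) - c • y ∈ J := by
  have := Ideal.mul_mem_left J y (Ideal.subset_span rfl)
  rw [mul_sub, mul_one] at this
  rw [← smul_sub c (y * (qpA K q * qpB K q)) y]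
  exact Submodule.smul_of_tower_mem _ c this

theorem qpA_mul_qpB_pow_succ_sub_mem (j : ℕ) :
    qpA K q * qpB K q ^ (j + 1) - q ^ j • qpB K q ^ j ∈ J := by
  rw [pow_succ', ← mul_assoc, qpA_mul_qpB_mul_qpB_pow]
  exact smul_mul_qpA_mul_qpB_sub_smul_mem _ _

theorem qpB_mul_qpA_pow_succ_sub_mem (hq0 : q ≠ 0) (m : ℕ) :
    qpB K q * qpA K q ^ (m + 1) - q⁻¹ ^ (m + 1) • qpA K q ^ m ∈ J := by
  rw [pow_succ', ← mul_assoc, qpB_mul_qpA hq0, smul_mul_assoc, qpA_mul_qpB_mul_qpA_pow hq0,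
    smul_smul, ← pow_succ']
  exact smul_mul_qpA_mul_qpB_sub_smul_mem _ _

variable (K q) in
def monomial : ℤ → QuantumPlane K q
  | (m : ℕ) => qpA K q ^ m
  | .negSucc j => qpB K q ^ (j + 1)

theorem monomial_natCast (m : ℕ) : monomial K q m = qpA K q ^ m := rfl

theorem monomial_neg_natCast (j : ℕ) : monomial K q (-j) = qpB K q ^ j := by
  cases j
  · exact (pow_zero _).trans (pow_zero _).symm
  · rfl

theorem qpA_mul_monomial_sub_mem (n : ℤ) :
    ∃ c : K, qpA K q * monomial K q n - c • monomial K q (n + 1) ∈ J := by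
  rcases n with m | j
  · refine ⟨1, ?_⟩
    rw [Int.ofNat_eq_natCast, one_smul, ← Nat.cast_succ, monomial_natCast, monomial_natCast,
      pow_succ', sub_self]
    exact zero_mem _
  · refine ⟨q ^ j, ?_⟩
    rw [show Int.negSucc j + 1 = -(j : ℤ) by omega, monomial_neg_natCast]
    exact qpA_mul_qpB_pow_succ_sub_mem j

theorem qpB_mul_monomial_sub_mem (hq0 : q ≠ 0) (n : ℤ) :
    ∃ c : K, qpB K q * monomial K q n - c • monomial K q (n - 1) ∈ J := by
  rcases n with (_ | m) | j
  · refine ⟨1, ?_⟩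
    rw [show Int.ofNat 0 - 1 = -((1 : ℕ) : ℤ) by rfl, monomial_neg_natCast, one_smul, pow_one]
    show qpB K q * qpA K q ^ 0 - qpB K q ∈ J
    rw [pow_zero, mul_one, sub_self]
    exact zero_mem _
  · refine ⟨q⁻¹ ^ (m + 1), ?_⟩
    rw [Int.ofNat_eq_natCast, Nat.cast_succ, add_sub_cancel_right, monomial_natCast]
    exact qpB_mul_qpA_pow_succ_sub_mem hq0 m
  · refine ⟨1, ?_⟩
    rw [show Int.negSucc j - 1 = -((j + 2 : ℕ) : ℤ) by omega, monomial_neg_natCast, one_smul]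
    show qpB K q * qpB K q ^ (j + 1) - qpB K q ^ (j + 2) ∈ J
    rw [← pow_succ', sub_self]
    exact zero_mem _

theorem mem_span_range_monomial_sup (hq0 : q ≠ 0) (y : QuantumPlane K q) :
    y ∈ Submodule.span K (Set.range (monomial K q)) ⊔ Submodule.restrictScalars K J := by
  rw [← (Submodule.restrictScalars K J).span_eq, ← Submodule.span_union, ← mul_one y]
  refine Submodule.mul_mem_span_of_adjoin_eq_top adjoin_qpA_qpB ?_ y
    (Submodule.subset_span (Or.inl ⟨0, pow_zero _⟩))
  rintro r hr x (⟨n, rfl⟩ | hx)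
  · obtain ⟨c, n', hn'⟩ : ∃ (c : K) (n' : ℤ), r * monomial K q n - c • monomial K q n' ∈ J := by
      rcases hr with rfl | rfl
      · obtain ⟨c, hc⟩ := qpA_mul_monomial_sub_mem (q := q) n
        exact ⟨c, _, hc⟩
      · obtain ⟨c, hc⟩ := qpB_mul_monomial_sub_mem hq0 n
        exact ⟨c, _, hc⟩
    rw [← sub_add_cancel (r * monomial K q n) (c • monomial K q n')]
    exact add_mem (Submodule.subset_span (Or.inr hn'))
      (Submodule.smul_mem _ c (Submodule.subset_span (Or.inl ⟨n', rfl⟩)))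
  · exact Submodule.subset_span (Or.inr (Ideal.mul_mem_left _ r hx))

variable (K) in
def shiftUp : (ℤ →₀ K) →ₗ[K] (ℤ →₀ K) := Finsupp.lmapDomain K K (· + 1)

variable (K q) in
def qShiftDown : (ℤ →₀ K) →ₗ[K] (ℤ →₀ K) :=
  Finsupp.lsum K fun n => q ^ (-n) • Finsupp.lsingle (n - 1)

@[simp] theorem shiftUp_single (n : ℤ) (x : K) :
    shiftUp K (Finsupp.single n x) = Finsupp.single (n + 1) x := by
  simp [shiftUp]

@[simp] theorem qShiftDown_single (n : ℤ) (x : K) :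
    qShiftDown K q (Finsupp.single n x) = q ^ (-n) • Finsupp.single (n - 1) x := by
  simp [qShiftDown]

theorem shiftUp_mul_qShiftDown (hq0 : q ≠ 0) :
    shiftUp K * qShiftDown K q = q • (qShiftDown K q * shiftUp K) := by
  refine Finsupp.lhom_ext fun n x => ?_
  simp only [Module.End.mul_apply, LinearMap.smul_apply, shiftUp_single, qShiftDown_single,
    map_smul, smul_smul, sub_add_cancel, add_sub_cancel_right, neg_add, zpow_add₀ hq0,
    zpow_neg_one, mul_left_comm q, mul_inv_cancel₀ hq0, mul_one]

variable (K q) in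
def rep (hq0 : q ≠ 0) : QuantumPlane K q →ₐ[K] Module.End K (ℤ →₀ K) :=
  RingQuot.liftAlgHom K ⟨FreeAlgebra.lift K ![shiftUp K, qShiftDown K q], by
    rintro _ _ ⟨rfl, rfl⟩
    simpa using shiftUp_mul_qShiftDown hq0⟩

section Representation

variable (hq0 : q ≠ 0)

@[simp] theorem rep_qpA : rep K q hq0 (qpA K q) = shiftUp K := by
  simp [rep, qpA]

@[simp] theorem rep_qpB : rep K q hq0 (qpB K q) = qShiftDown K q := by
  simp [rep, qpB]

variable (q) in
def vacuumMap : QuantumPlane K q →ₗ[K] (ℤ →₀ K) :=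
  LinearMap.applyₗ (Finsupp.single 0 1) ∘ₗ (rep K q hq0).toLinearMap

theorem vacuumMap_apply (y : QuantumPlane K q) :
    vacuumMap q hq0 y = rep K q hq0 y (Finsupp.single 0 1) := rfl

theorem vacuumMap_mul (y z : QuantumPlane K q) :
    vacuumMap q hq0 (y * z) = rep K q hq0 y (vacuumMap q hq0 z) := by
  simp [vacuumMap_apply]

theorem vacuumMap_eq_zero_of_mem {y : QuantumPlane K q} (hy : y ∈ J) : vacuumMap q hq0 y = 0 := by
  obtain ⟨z, rfl⟩ := Ideal.mem_span_singleton'.1 hy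
  simp [vacuumMap_apply]

theorem rep_qpA_pow_single (m : ℕ) (n : ℤ) (x : K) :
    rep K q hq0 (qpA K q ^ m) (Finsupp.single n x) = Finsupp.single (n + m) x := by
  induction m with
  | zero => simp
  | succ m ih => rw [pow_succ', map_mul, Module.End.mul_apply, ih, rep_qpA, shiftUp_single,
      Nat.cast_succ, add_assoc]

theorem exists_rep_qpB_pow_single_zero (j : ℕ) :
    ∃ c : K, c ≠ 0 ∧
      rep K q hq0 (qpB K q ^ j) (Finsupp.single 0 1) = Finsupp.single (-(j : ℤ)) c := by
  induction j with
  | zero => exact ⟨1, one_ne_zero, by simp⟩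
  | succ j ih =>
    obtain ⟨c, hc0, hc⟩ := ih
    refine ⟨q ^ (j : ℤ) * c, mul_ne_zero (zpow_ne_zero _ hq0) hc0, ?_⟩
    rw [pow_succ', map_mul, Module.End.mul_apply, hc, rep_qpB, qShiftDown_single,
      Finsupp.smul_single, smul_eq_mul, neg_neg, Nat.cast_succ, neg_add, sub_eq_add_neg]

theorem exists_vacuumMap_monomial (n : ℤ) :
    ∃ c : K, c ≠ 0 ∧ vacuumMap q hq0 (monomial K q n) = Finsupp.single n c := by
  obtain ⟨m, rfl | rfl⟩ := Int.eq_nat_or_neg n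
  · exact ⟨1, one_ne_zero, by rw [monomial_natCast, vacuumMap_apply, rep_qpA_pow_single, zero_add]⟩
  · rw [monomial_neg_natCast]
    exact exists_rep_qpB_pow_single_zero hq0 m

theorem ker_vacuumMap : LinearMap.ker (vacuumMap q hq0) = Submodule.restrictScalars K J := by
  refine le_antisymm (fun y hy => ?_) fun y hy => vacuumMap_eq_zero_of_mem hq0 hy
  obtain ⟨u, hu, z, hz, rfl⟩ := Submodule.mem_sup.1 (mem_span_range_monomial_sup hq0 y)
  rw [← Finsupp.range_linearCombination] at hu
  obtain ⟨f, rfl⟩ := hu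
  choose c hc0 hc using exists_vacuumMap_monomial (q := q) hq0
  have hind : LinearIndependent K (vacuumMap q hq0 ∘ monomial K q) := by
    have := (Finsupp.linearIndependent_single_one K ℤ).units_smul
      fun n : ℤ => Units.mk0 (c n) (hc0 n)
    convert this using 1
    ext1 n
    simp [hc]
  have hf : f = 0 := by
    refine linearIndependent_iff.1 hind f ?_
    rw [← Finsupp.apply_linearCombination,
      ← add_sub_cancel_right (Finsupp.linearCombination K _ f) z, map_sub, LinearMap.mem_ker.1 hy, vacuumMap_eq_zero_of_mem hq0 hz, sub_zero]
  simpa [hf] using hz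

theorem rep_qpA_mul_qpB_apply (v : ℤ →₀ K) (n : ℤ) :
    rep K q hq0 (qpA K q * qpB K q) v n = q ^ (-n) * v n := by
  induction v using Finsupp.induction_linear with
  | zero => simp
  | add v w hv hw => simp_all [mul_add]
  | single m x =>
    simp only [map_mul, Module.End.mul_apply, rep_qpA, rep_qpB, qShiftDown_single, map_smul,
      shiftUp_single, sub_add_cancel, Finsupp.smul_apply, Finsupp.single_apply, smul_eq_mul]
    split_ifs with h
    · rw [h]
    · simp

theorem rep_qpA_mul_qpB_sub_algebraMap_apply (c : K) (v : ℤ →₀ K) (n : ℤ) :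
    rep K q hq0 (qpA K q * qpB K q - algebraMap K _ c) v n = (q ^ (-n) - c) * v n := by
  rw [map_sub, LinearMap.sub_apply, Finsupp.sub_apply, rep_qpA_mul_qpB_apply, AlgHom.commutes,
    Module.algebraMap_end_apply, Finsupp.smul_apply, smul_eq_mul, sub_mul]

theorem exists_rep_apply_eq_single (hq : ¬ IsOfFinOrder q) {v : ℤ →₀ K} (hv : v ≠ 0) :
    ∃ (y : QuantumPlane K q) (n : ℤ), rep K q hq0 y v = Finsupp.single n 1 := by
  induction h : v.support.card using Nat.strong_induction_on generalizing v with
  | _ k ih =>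
  obtain ⟨n, hn⟩ := Finsupp.support_nonempty_iff.2 hv
  by_cases hsub : v.support ⊆ {n}
  · refine ⟨algebraMap K _ (v n)⁻¹, n, ?_⟩
    rw [AlgHom.commutes, Module.algebraMap_end_apply, Finsupp.support_subset_singleton.1 hsub]
    simp [Finsupp.mem_support_iff.1 hn]
  · obtain ⟨k, hk, hkn⟩ := Finset.not_subset.1 hsub
    -- `ab - q⁻ᵏ` kills the `k`-th coordinate and rescales the others by nonzero factors
    set w := rep K q hq0 (qpA K q * qpB K q - algebraMap K _ (q ^ (-k))) v with hw_def
    have hw (m : ℤ) : w m = (q ^ (-m) - q ^ (-k)) * v m :=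
      rep_qpA_mul_qpB_sub_algebraMap_apply hq0 _ v m
    have hwn : w n ≠ 0 := by
      refine hw n ▸ mul_ne_zero (sub_ne_zero.2 fun h => hkn ?_) (Finsupp.mem_support_iff.1 hn)
      simpa using (zpow_injective_of_not_isOfFinOrder hq0 hq h).symm
    have hsupp : w.support ⊂ v.support := by
      refine (Finset.ssubset_iff_of_subset fun m hm => ?_).2 ⟨k, hk, by simp [hw]⟩
      simp only [Finsupp.mem_support_iff, hw] at hm ⊢
      exact right_ne_zero_of_mul hm
    obtain ⟨y, m, hy⟩ := ih _ (h ▸ Finset.card_lt_card hsupp) (fun h0 => hwn (by simp [h0])) rfl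
    exact ⟨y * (qpA K q * qpB K q - algebraMap K _ (q ^ (-k))), m, by
      rw [map_mul, Module.End.mul_apply, ← hw_def, hy]⟩

theorem exists_rep_single_eq_single_zero (n : ℤ) :
    ∃ y : QuantumPlane K q, rep K q hq0 y (Finsupp.single n 1) = Finsupp.single 0 1 := by
  induction n using Int.induction_on with
  | zero => exact ⟨1, by simp⟩
  | succ n ih =>
    obtain ⟨y, hy⟩ := ih
    refine ⟨q ^ (n + 1 : ℤ) • (y * qpB K q), ?_⟩
    rw [map_smul, map_mul, LinearMap.smul_apply, Module.End.mul_apply, rep_qpB, qShiftDown_single,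
      add_sub_cancel_right, map_smul, hy, smul_smul, ← zpow_add₀ hq0, add_neg_cancel, zpow_zero,
      one_smul]
  | pred n ih =>
    obtain ⟨y, hy⟩ := ih
    exact ⟨y * qpA K q, by
      rw [map_mul, Module.End.mul_apply, rep_qpA, shiftUp_single, sub_add_cancel, hy]⟩

theorem exists_rep_apply_eq_single_zero (hq : ¬ IsOfFinOrder q) {v : ℤ →₀ K} (hv : v ≠ 0) :
    ∃ y : QuantumPlane K q, rep K q hq0 y v = Finsupp.single 0 1 := by
  obtain ⟨y, n, hy⟩ := exists_rep_apply_eq_single hq0 hq hv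
  obtain ⟨y', hy'⟩ := exists_rep_single_eq_single_zero hq0 n
  exact ⟨y' * y, by rw [map_mul, Module.End.mul_apply, hy, hy']⟩

end Representation

theorem isMaximal_span_qpA_mul_qpB_sub_one (hq0 : q ≠ 0) (hq : ¬ IsOfFinOrder q) :
    (J).IsMaximal := by
  rw [Ideal.isMaximal_iff]
  refine ⟨fun h1 => ?_, fun I x hJI hxJ hxI => ?_⟩
  · simpa [vacuumMap_apply] using vacuumMap_eq_zero_of_mem hq0 h1
  · have hx : vacuumMap q hq0 x ≠ 0 := fun h0 => hxJ <| by
      simpa [ker_vacuumMap] using LinearMap.mem_ker.2 h0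
    obtain ⟨y, hy⟩ := exists_rep_apply_eq_single_zero hq0 hq hx
    have hyx : y * x - 1 ∈ J := by
      rw [← Submodule.restrictScalars_mem K, ← ker_vacuumMap hq0, LinearMap.mem_ker, map_sub,
        vacuumMap_mul, hy, vacuumMap_apply, map_one, Module.End.one_apply, sub_self]
    simpa using I.sub_mem (I.mul_mem_left y hxI) (hJI hyx)

variable (K) in
def laurentEval (t : K) : (ℤ →₀ K) →ₗ[K] K := Finsupp.linearCombination K (t ^ ·)

theorem laurentEval_shiftUp {t : K} (ht : t ≠ 0) (v : ℤ →₀ K) :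
    laurentEval K t (shiftUp K v) = t * laurentEval K t v := by
  have : laurentEval K t ∘ₗ shiftUp K = t • laurentEval K t :=
    Finsupp.lhom_ext fun n x => by
      simp [laurentEval, zpow_add_one₀ ht]
      ring
  exact LinearMap.congr_fun this v

theorem not_exists_smul_qpA_sub_one_mul_sub_one_mem (hq0 : q ≠ 0) {c : K} (hc : c ≠ 0) :
    ¬ ∃ z : QuantumPlane K q, (c • qpA K q - 1) * z - 1 ∈ J := by
  rintro ⟨z, hz⟩
  -- evaluating at `c⁻¹` kills the image of `c • shiftUp K - 1`, but not the vacuum vector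
  have h := congrArg (laurentEval K c⁻¹) (vacuumMap_eq_zero_of_mem hq0 hz)
  simp [vacuumMap_mul, laurentEval_shiftUp (inv_ne_zero hc), hc] at h
  simp [vacuumMap_apply, laurentEval] at h

end QuantumPlane

theorem quantumPlane_maximal_and_no_solution_general (K : Type*) [Field K] (q : K) (hq0 : q ≠ 0)
    (hq : ∀ n : ℕ, 0 < n → q ^ n ≠ 1)
    (σ : QuantumPlane K q ≃ₐ[K] QuantumPlane K q)
    (hσa : σ (qpA K q) = q⁻¹ • qpA K q) :
    (Ideal.span {qpA K q * qpB K q - 1}).IsMaximal ∧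
    ∀ m : ℕ, ¬ ∃ z : QuantumPlane K q,
      (σ ^ m) (qpA K q - 1) * z - 1 ∈ Ideal.span {qpA K q * qpB K q - 1} := by
  have hq' : ¬ IsOfFinOrder q := by simpa [isOfFinOrder_iff_pow_eq_one] using hq
  refine ⟨QuantumPlane.isMaximal_span_qpA_mul_qpB_sub_one hq0 hq', fun m => ?_⟩
  rw [map_sub, map_one, σ.pow_apply_eq_smul hσa]
  exact QuantumPlane.not_exists_smul_qpA_sub_one_mul_sub_one_mem hq0
    (pow_ne_zero m (inv_ne_zero hq0))

/-- for the quantum plane with `q` not a root of unity, `σ` the `K`-algebra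
automorphism with `σ a = q⁻¹ a`, `σ b = q b`, `J = A(ab − 1)` and `x = a − 1`:
`J` is a maximal left ideal and for every `m ≥ 0` there is no `z` with `σ^m x * z − 1 ∈ J`. -/
theorem quantumPlane_maximal_and_no_solution (K : Type*) [Field K] (q : K) (hq0 : q ≠ 0)
    (hq : ∀ n : ℕ, 0 < n → q ^ n ≠ 1)
    (σ : QuantumPlane K q ≃ₐ[K] QuantumPlane K q)
    (hσa : σ (qpA K q) = q⁻¹ • qpA K q) (hσb : σ (qpB K q) = q • qpB K q) :
    (Ideal.span {qpA K q * qpB K q - 1}).IsMaximal ∧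
    ∀ m : ℕ, ¬ ∃ z : QuantumPlane K q,
      (σ ^ m) (qpA K q - 1) * z - 1 ∈ Ideal.span {qpA K q * qpB K q - 1} :=
  quantumPlane_maximal_and_no_solution_general K q hq0 hq σ hσa

end
end

section
/- Let K be a field of characteristic zero, let r ≥ 1 be an integer, and let d be the K-linear derivation of the polynomial ring K[a] determined by d(a) = a^r. Then every nonzero ideal Q of K[a] satisfying d(Q) ⊆ Q is generated by a power of a, i.e. Q = (a^m) for some m ≥ 0. -/
/-!
Every derivation of `K[X]` is `p ↦ p' · d(X)`, so a generator `g` of `Q` satisfies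
`g ∣ X ^ r · g'`. Writing `g = X ^ m · h` with `X ∤ h`, one gets `X · g' = X ^ m (m h + X h')`,
hence `h ∣ X ^ (r + 1) · h'`. As `h` is coprime to `X`, `h ∣ h'`, which forces `h' = 0`:
in characteristic zero `h` is a nonzero constant and `Q = (X ^ m)`.
-/

open Polynomial

namespace Polynomial

theorem derivation_apply_eq_derivative_mul {R : Type*} [CommSemiring R]
    (D : Derivation R R[X] R[X]) (p : R[X]) : D p = derivative p * D X := by
  have hD : D = mkDerivation R (D X) := derivation_ext (mkDerivation_X R (D X)).symm
  rw [DFunLike.congr_fun hD p, mkDerivation_apply, smul_eq_mul]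

theorem X_mul_derivative_X_pow_mul {R : Type*} [CommSemiring R] (m : ℕ) (h : R[X]) :
    X * derivative (X ^ m * h) = X ^ m * (C (m : R) * h + X * derivative h) := by
  cases m with
  | zero => simp
  | succ n =>
    rw [derivative_mul, derivative_X_pow, Nat.add_sub_cancel, Nat.cast_add_one]
    ring

variable {K : Type*} [Field K] [CharZero K]

theorem eq_C_of_dvd_X_pow_mul_derivative {h : K[X]} (hX : ¬X ∣ h) {k : ℕ}
    (hdvd : h ∣ X ^ k * derivative h) : h = C (h.coeff 0) := by
  have hcop : IsCoprime h (X ^ k) := (irreducible_X.coprime_iff_not_dvd.2 hX).pow_left.symm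
  exact eq_C_of_derivative_eq_zero (dvd_derivative_iff.1 (hcop.dvd_of_dvd_mul_left hdvd))

theorem exists_associated_X_pow_of_dvd_X_pow_mul_derivative {g : K[X]} (hg : g ≠ 0) {k : ℕ}
    (hdvd : g ∣ X ^ k * derivative g) : ∃ m : ℕ, Associated g (X ^ m) := by
  obtain ⟨h, hgh, hXh⟩ := g.exists_eq_pow_rootMultiplicity_mul_and_not_dvd hg 0
  set m := g.rootMultiplicity 0
  rw [map_zero, sub_zero] at hgh hXh
  have hdvd_h : h ∣ h * (C (m : K) * X ^ k) + X ^ (k + 1) * derivative h := by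
    have : X ^ m * h ∣ X ^ m * (X ^ k * (C (m : K) * h + X * derivative h)) := by
      rw [← hgh, mul_left_comm, ← X_mul_derivative_X_pow_mul, ← hgh, mul_left_comm]
      exact hdvd.mul_left X
    convert (mul_dvd_mul_iff_left (pow_ne_zero m X_ne_zero)).1 this using 1
    ring
  have hC := eq_C_of_dvd_X_pow_mul_derivative hXh ((dvd_add_right (dvd_mul_right h _)).1 hdvd_h)
  have hc : h.coeff 0 ≠ 0 := fun hc ↦ hg (by rw [hgh, hC, hc, C_0, mul_zero])
  refine ⟨m, ?_⟩
  rw [hgh, hC]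
  exact associated_mul_unit_left _ _ (isUnit_C.2 hc.isUnit)

end Polynomial

theorem derivation_invariant_ideal_is_power_general {K : Type*} [Field K] [CharZero K]
    (r : ℕ)
    (d : Derivation K (Polynomial K) (Polynomial K))
    (hd : d Polynomial.X = Polynomial.X ^ r)
    (Q : Ideal (Polynomial K)) (hQ : Q ≠ ⊥) (hdQ : ∀ p ∈ Q, d p ∈ Q) :
    ∃ m : ℕ, Q = Ideal.span {Polynomial.X ^ m} := by
  obtain ⟨g, rfl⟩ := Submodule.IsPrincipal.principal Q
  have hg : g ≠ 0 := by rintro rfl; exact hQ (Ideal.span_singleton_eq_bot.2 rfl)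
  have hdvd : g ∣ X ^ r * derivative g := by
    have hdg := hdQ g (Ideal.mem_span_singleton_self g)
    rwa [derivation_apply_eq_derivative_mul, hd, mul_comm, Ideal.mem_span_singleton] at hdg
  obtain ⟨m, hm⟩ := exists_associated_X_pow_of_dvd_X_pow_mul_derivative hg hdvd
  exact ⟨m, Ideal.span_singleton_eq_span_singleton.2 hm⟩

/-- Lemma 3.4: over a field of characteristic zero, for the derivation `d` of
`K[a]` with `d(a) = a^r` (`r ≥ 1`), every nonzero `d`-invariant ideal of `K[a]` is generated
by a power of `a`. -/
theorem derivation_invariant_ideal_is_power {K : Type*} [Field K] [CharZero K]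
    (r : ℕ) (hr : 1 ≤ r)
    (d : Derivation K (Polynomial K) (Polynomial K))
    (hd : d Polynomial.X = Polynomial.X ^ r)
    (Q : Ideal (Polynomial K)) (hQ : Q ≠ ⊥) (hdQ : ∀ p ∈ Q, d p ∈ Q) :
    ∃ m : ℕ, Q = Ideal.span {Polynomial.X ^ m} :=
  derivation_invariant_ideal_is_power_general r d hd Q hQ hdQ
end

section
/- Let K be a field of characteristic zero and let η ∈ K be nonzero and not a root of unity; set α = 1+η and β = −η. For λ ∈ K define the sequence λ_{−1} = 0, λ_0 = λ, and λ_n = α·λ_{n−1} + β·λ_{n−2} + 1 for n ≥ 1. Then the set of λ ∈ K such that λ_n ≠ 0 for all n ≥ 0 is infinite. -/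
/-- The sequence `λ_{−1} = 0`, `λ_0 = l`, `λ_n = α·λ_{n−1} + β·λ_{n−2} + 1` (indexed from
`0`, so `lamSeq α β l 1 = α·l + β·0 + 1`). -/
def lamSeq {K : Type*} [Field K] (α β : K) (l : K) : ℕ → K
  | 0 => l
  | 1 => α * l + β * 0 + 1
  | n + 2 => α * lamSeq α β l (n + 1) + β * lamSeq α β l n + 1

/-!
Solving the recurrence, the sequence started at `λ = m - (η - 1)⁻¹` with `m ∈ ℕ` satisfies
`(η - 1) λ_n = m (η^(n+1) - 1) - (n + 1)`, so it vanishes somewhere only if `m (η^j - 1) = j`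
for some `j ≥ 1`. Two such relations give `η^j = 1 + j/m` and `η^j' = 1 + j'/m'`, hence the
rational identity `(1 + j/m)^j' = (1 + j'/m')^j`; taking real logarithms,
`j' log (1 + j/m) = j log (1 + j'/m') ≤ j j' / m'`. So, one solution `(m, j)` being fixed,
every other `m'` is at most `j / log (1 + j/m)`, and all but finitely many `m` give a
sequence that never vanishes.
-/

open Real

lemma sub_one_mul_lamSeq {K : Type*} [Field K] {η : K} (hη : η - 1 ≠ 0) (D : K) (n : ℕ) :
    (η - 1) * lamSeq (1 + η) (-η) (D - (η - 1)⁻¹) n = D * (η ^ (n + 1) - 1) - (n + 1) := by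
  induction n using Nat.twoStepInduction with
  | zero => simp only [lamSeq]; field_simp; ring
  | one => simp only [lamSeq]; field_simp; ring
  | more n ih₁ ih₂ =>
    simp only [lamSeq]
    push_cast at ih₁ ih₂ ⊢
    linear_combination (1 + η) * ih₂ - η * ih₁

lemma ne_zero_of_natCast_mul_eq {R : Type*} [NonAssocSemiring R] [CharZero R] {m j : ℕ}
    {x : R} (h : (m : R) * x = j) (hj : j ≠ 0) : m ≠ 0 := by
  rintro rfl
  rw [Nat.cast_zero, zero_mul, eq_comm, Nat.cast_eq_zero] at h
  exact hj h

lemma pow_eq_one_add_div {K : Type*} [Field K] [CharZero K] {η : K} {m j : ℕ}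
    (h : (m : K) * (η ^ j - 1) = j) (hj : j ≠ 0) : η ^ j = ((1 + j / m : ℚ) : K) := by
  have hm : (m : K) ≠ 0 := Nat.cast_ne_zero.mpr (ne_zero_of_natCast_mul_eq h hj)
  push_cast
  field_simp
  linear_combination h

lemma one_add_div_pow_eq_of_mul_pow_sub_one_eq {K : Type*} [Field K] [CharZero K] {η : K}
    {m j m' j' : ℕ} (h : (m : K) * (η ^ j - 1) = j) (h' : (m' : K) * (η ^ j' - 1) = j')
    (hj : j ≠ 0) (hj' : j' ≠ 0) :
    (1 + j / m : ℝ) ^ j' = (1 + j' / m' : ℝ) ^ j := by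
  have hℚ : (1 + j / m : ℚ) ^ j' = (1 + j' / m' : ℚ) ^ j := by
    apply Rat.cast_injective (α := K)
    rw [Rat.cast_pow, Rat.cast_pow, ← pow_eq_one_add_div h hj, ← pow_eq_one_add_div h' hj',
      ← pow_mul, ← pow_mul, mul_comm]
  simpa using congrArg (Rat.cast : ℚ → ℝ) hℚ

lemma mul_log_one_add_le_of_pow_eq {x y : ℝ} {p q : ℕ} (hy : 0 < 1 + y)
    (h : (1 + x) ^ p = (1 + y) ^ q) : p * log (1 + x) ≤ q * y := by
  calc p * log (1 + x) = q * log (1 + y) := by rw [← log_pow, h, log_pow]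
    _ ≤ q * y := by
      gcongr
      linarith [log_le_sub_one_of_pos hy]

theorem finite_setOf_natCast_mul_pow_sub_one_eq {K : Type*} [Field K] [CharZero K] (η : K) :
    {m : ℕ | ∃ j : ℕ, j ≠ 0 ∧ (m : K) * (η ^ j - 1) = j}.Finite := by
  obtain hempty | ⟨m₀, j₀, hj₀, h₀⟩ := Set.eq_empty_or_nonempty
    {m : ℕ | ∃ j : ℕ, j ≠ 0 ∧ (m : K) * (η ^ j - 1) = j}
  · exact hempty ▸ Set.finite_empty
  have hm₀ : (0 : ℝ) < m₀ := by
    exact_mod_cast Nat.pos_of_ne_zero (ne_zero_of_natCast_mul_eq h₀ hj₀)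
  set c := log (1 + j₀ / m₀)
  have hc : 0 < c := log_pos (lt_add_of_pos_right 1 (by positivity))
  refine (Set.finite_Iic ⌈j₀ / c⌉₊).subset ?_
  rintro m ⟨j, hj, h⟩
  have hm : (0 : ℝ) < m := by
    exact_mod_cast Nat.pos_of_ne_zero (ne_zero_of_natCast_mul_eq h hj)
  have hlog := mul_log_one_add_le_of_pow_eq (by positivity)
    (one_add_div_pow_eq_of_mul_pow_sub_one_eq h₀ h hj₀ hj)
  have hjpos : (0 : ℝ) < j := by positivity
  have : (m : ℝ) ≤ j₀ / c := by
    rw [le_div_iff₀ hc]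
    rw [mul_div_assoc', le_div_iff₀ hm] at hlog
    nlinarith
  exact_mod_cast this.trans (Nat.le_ceil _)

theorem infinitely_many_simple_verma_general {K : Type*} [Field K] [CharZero K]
    (η : K) (hη : ∀ n : ℕ, 0 < n → η ^ n ≠ 1) :
    {l : K | ∀ n : ℕ, lamSeq (1 + η) (-η) l n ≠ 0}.Infinite := by
  have hη1 : η - 1 ≠ 0 := sub_ne_zero.mpr (by simpa using hη 1 one_pos)
  have hinj : Function.Injective fun m : ℕ => (m : K) - (η - 1)⁻¹ :=
    (sub_left_injective (b := (η - 1)⁻¹)).comp Nat.cast_injective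
  refine (((finite_setOf_natCast_mul_pow_sub_one_eq η).infinite_compl).image
    hinj.injOn).mono ?_
  rintro _ ⟨m, hm, rfl⟩ n hn
  refine hm ⟨n + 1, n.succ_ne_zero, ?_⟩
  push_cast
  linear_combination -(sub_one_mul_lamSeq hη1 m n) + (η - 1) * hn

/-- Lemma 4.7: over a field of characteristic zero, if `η` is nonzero and
not a root of unity, `α = 1 + η`, `β = −η`, then the set of `λ ∈ K` for which the sequence
`λ_n` (with `λ_{−1} = 0`, `λ_0 = λ`, `λ_n = αλ_{n−1} + βλ_{n−2} + 1`) never vanishes is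
infinite.  (Equivalently, `A_η` has infinitely many pairwise non-isomorphic simple Verma
modules.) -/
theorem infinitely_many_simple_verma {K : Type*} [Field K] [CharZero K]
    (η : K) (hη0 : η ≠ 0) (hη : ∀ n : ℕ, 0 < n → η ^ n ≠ 1) :
    {l : K | ∀ n : ℕ, lamSeq (1 + η) (-η) l n ≠ 0}.Infinite :=
  infinitely_many_simple_verma_general η hη
end
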